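/- arXiv:1201.1546 — 2 statements merged into one kernel-verified Lean document; each statement's English description precedes it below -/
import Mathlib

section
/- Let 1 ≤ d ≤ 4, let M ∈ S_d^+ and let (u_1,…,u_d) be an M-reduced basis of ℤ^d. Fix 1 ≤ i ≤ d and let z be any integer linear combination of the basis elements distinct from u_i, i.e. z = α_1 u_1 + ⋯ + α_{i−1} u_{i−1} + α_{i+1} u_{i+1} + ⋯ + α_d u_d with α_j ∈ ℤ. Then 2·|u_iᵀ M z| ≤ ‖z‖_M². -/
open Matrix
open scoped BigOperators ENNReal Classical

noncomputable section

/-- Euclidean norm of a vector of `ℝ^d`. -/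
def euclNorm {d : ℕ} (u : Fin d → ℝ) : ℝ := Real.sqrt (u ⬝ᵥ u)

/-- The norm `‖u‖_M := √(uᵀ M u)` associated to a matrix `M`. -/
def normM {d : ℕ} (M : Matrix (Fin d) (Fin d) ℝ) (u : Fin d → ℝ) : ℝ :=
  Real.sqrt (u ⬝ᵥ M.mulVec u)

/-- Operator norm of a matrix, with respect to the euclidean norm. -/
def opNorm {d : ℕ} (M : Matrix (Fin d) (Fin d) ℝ) : ℝ :=
  sSup {r : ℝ | ∃ u : Fin d → ℝ, euclNorm u = 1 ∧ r = euclNorm (M.mulVec u)}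

/-- Anisotropy ratio `κ(M) := max ‖u‖_M/‖v‖_M` over euclidean-unit vectors `u, v`. -/
def kappa {d : ℕ} (M : Matrix (Fin d) (Fin d) ℝ) : ℝ :=
  sSup {r : ℝ | ∃ u v : Fin d → ℝ,
    euclNorm u = 1 ∧ euclNorm v = 1 ∧ r = normM M u / normM M v}

/-- `z` has integer coordinates, i.e. `z ∈ ℤ^d`. -/
def IsIntVec {d : ℕ} (z : Fin d → ℝ) : Prop := ∀ i, ∃ m : ℤ, z i = (m : ℝ)

/-- `z` belongs to the sub-lattice `u_0 ℤ + ⋯ + u_{k-1} ℤ` generated by the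
first `k` vectors of the family `u`. -/
def InLatticeSpan {d : ℕ} (u : Fin d → Fin d → ℝ) (k : ℕ) (z : Fin d → ℝ) : Prop :=
  ∃ c : Fin d → ℤ, (∀ i : Fin d, ¬ ((i : ℕ) < k) → c i = 0) ∧ z = ∑ i, (c i : ℝ) • u i

/-- `u` is an `M`-reduced basis of `ℤ^d`: a basis of the lattice `ℤ^d`
(integer entries, determinant `±1`) such that each `u k` minimizes `‖·‖_M`
among integer vectors outside the sub-lattice spanned by `u 0, …, u (k-1)`. -/
def IsReducedBasis {d : ℕ} (M : Matrix (Fin d) (Fin d) ℝ) (u : Fin d → Fin d → ℝ) : Prop :=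
  (∀ i, IsIntVec (u i)) ∧ |(Matrix.of u).det| = 1 ∧
  ∀ k : Fin d, ∀ z : Fin d → ℝ, IsIntVec z → ¬ InLatticeSpan u (k : ℕ) z →
    normM M (u k) ≤ normM M z

/-- A simplex of `ℝ^d`, described by its vertex set: `d+1` affinely independent points. -/
def IsSimplex (d : ℕ) (V : Finset (Fin d → ℝ)) : Prop :=
  V.card = d + 1 ∧ AffineIndependent ℝ (fun v : V => (v : Fin d → ℝ))

/-- A (conforming) mesh: a finite collection of simplices such that the intersection
of any two of them is the convex hull of their common vertices. -/
def IsMesh (d : ℕ) (𝒯 : Finset (Finset (Fin d → ℝ))) : Prop :=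
  (∀ V ∈ 𝒯, IsSimplex d V) ∧
  ∀ S ∈ 𝒯, ∀ T ∈ 𝒯,
    (convexHull ℝ (S : Set (Fin d → ℝ))) ∩ (convexHull ℝ (T : Set (Fin d → ℝ)))
      = convexHull ℝ ((S ∩ T : Finset (Fin d → ℝ)) : Set (Fin d → ℝ))

/-- An `M`-reduced mesh. -/
def IsReducedMesh {d : ℕ} (M : Matrix (Fin d) (Fin d) ℝ)
    (𝒯 : Finset (Finset (Fin d → ℝ))) : Prop :=
  IsMesh d 𝒯 ∧
  (⋃ V ∈ 𝒯, convexHull ℝ (V : Set (Fin d → ℝ))) ∈ nhds (0 : Fin d → ℝ) ∧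
  (∀ V ∈ 𝒯, ∀ v ∈ V, IsIntVec v) ∧
  (∀ V ∈ 𝒯, MeasureTheory.volume (convexHull ℝ (V : Set (Fin d → ℝ)))
      = ENNReal.ofReal (1 / (Nat.factorial d))) ∧
  (∀ V ∈ 𝒯, (0 : Fin d → ℝ) ∈ V) ∧
  (∀ V ∈ 𝒯, ∀ v ∈ V, ∀ w ∈ V, v ≠ 0 → w ≠ 0 → 0 ≤ v ⬝ᵥ M.mulVec w)

/-- `z` is a vertex of the mesh `𝒯`. -/
def IsMeshVertex {d : ℕ} (𝒯 : Finset (Finset (Fin d → ℝ))) (z : Fin d → ℝ) : Prop :=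
  ∃ V ∈ 𝒯, z ∈ V

/-- The multiplicative distance `d_×(M,N) := sup_{u ≠ 0} |ln ‖u‖_M − ln ‖u‖_N|`. -/
def dTimes {d : ℕ} (M N : Matrix (Fin d) (Fin d) ℝ) : ℝ :=
  sSup {r : ℝ | ∃ u : Fin d → ℝ, u ≠ 0 ∧ r = |Real.log (normM M u) - Real.log (normM N u)|}

/-- The periodic unit box `Ω = (ℝ/ℤ)^d`. -/
abbrev Torus (d : ℕ) : Type := Fin d → AddCircle (1 : ℝ)

/-- Canonical projection `ℝ^d → (ℝ/ℤ)^d`. -/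
def toTorus {d : ℕ} (x : Fin d → ℝ) : Torus d := fun i => (x i : AddCircle (1 : ℝ))

/-- The grid `Ω_n = {0, 1/n, …, (n-1)/n}^d ⊂ Ω`. -/
def IsGridPoint {d : ℕ} (n : ℕ) (z : Torus d) : Prop :=
  ∃ k : Fin d → ℤ, ∀ i, z i = (((k i : ℝ) / (n : ℝ) : ℝ) : AddCircle (1 : ℝ))

/-- The quotient (periodic) distance on the torus. -/
def dPer {d : ℕ} (z x : Torus d) : ℝ :=
  sInf {r : ℝ | ∃ Z X : Fin d → ℝ, toTorus Z = z ∧ toTorus X = x ∧ r = euclNorm (Z - X)}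

/-- The Hopf–Lax update operator associated to the matrix `M`, the stencil (mesh) `𝒯`,
and the grid scale `1/n`: minimum over simplices `T ∈ 𝒯`, and over barycentric
coefficients `α ≥ 0` supported on the nonzero vertices of `T` with total mass 1, of
`‖∑ α_v v/n‖_M + ∑ α_v u(z + v/n)` (with the convention `0·∞ = 0`). -/
def hopfLax {d : ℕ} (M : Matrix (Fin d) (Fin d) ℝ) (𝒯 : Finset (Finset (Fin d → ℝ)))
    (n : ℕ) (u : Torus d → ℝ≥0∞) (z : Torus d) : ℝ≥0∞ :=
  ⨅ (T : Finset (Fin d → ℝ)) (_ : T ∈ 𝒯) (α : (Fin d → ℝ) → ℝ)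
    (_ : ∀ w, 0 ≤ α w) (_ : α 0 = 0) (_ : ∑ w ∈ T, α w = 1),
    ENNReal.ofReal (normM M ((n : ℝ)⁻¹ • ∑ w ∈ T, α w • w)) +
      ∑ w ∈ T, ENNReal.ofReal (α w) * u (z + toTorus ((n : ℝ)⁻¹ • w))

/-- `u` solves the discrete fixed point system: `u(0) = 0` and
`u(z) = Λ_n(u,z)` at every other grid point `z`. -/
def SolvesDiscrete {d : ℕ} (𝓜 : Torus d → Matrix (Fin d) (Fin d) ℝ)
    (𝒯 : Torus d → Finset (Finset (Fin d → ℝ))) (n : ℕ) (u : Torus d → ℝ≥0∞) : Prop :=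
  u 0 = 0 ∧ ∀ z : Torus d, IsGridPoint n z → z ≠ 0 → u z = hopfLax (𝓜 z) (𝒯 z) n u z



lemma normM_sq {d : ℕ} {M : Matrix (Fin d) (Fin d) ℝ} (hM : M.PosDef) (x : Fin d → ℝ) :
    (normM M x) ^ 2 = x ⬝ᵥ M.mulVec x :=
  Real.sq_sqrt (hM.posSemidef.re_dotProduct_nonneg x)

lemma dot_symm' {d : ℕ} {M : Matrix (Fin d) (Fin d) ℝ} (hM : M.PosDef)
    (x y : Fin d → ℝ) : x ⬝ᵥ M.mulVec y = y ⬝ᵥ M.mulVec x := by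
  have h : Mᵀ = M := by
    have := hM.isHermitian
    simpa [Matrix.IsHermitian] using this
  rw [Matrix.dotProduct_mulVec, ← Matrix.mulVec_transpose, h, dotProduct_comm]

/-- Proposition `prop:normRed`, second part: for an `M`-reduced basis `u` and any
integer combination `z` of the basis vectors other than `u i`, `2|u_iᵀ M z| ≤ ‖z‖_M²`. -/
theorem stmt3 {d : ℕ} (hd1 : 1 ≤ d) (hd4 : d ≤ 4)
    (M : Matrix (Fin d) (Fin d) ℝ) (hM : M.PosDef)
    (u : Fin d → Fin d → ℝ) (hu : IsReducedBasis M u) (i : Fin d)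
    (α : Fin d → ℤ) (z : Fin d → ℝ)
    (hz : z = ∑ j ∈ Finset.univ.erase i, (α j : ℝ) • u j) :
    2 * |u i ⬝ᵥ M.mulVec z| ≤ (normM M z) ^ 2 := by
  obtain ⟨hint, hdet, hmin⟩ := hu
  -- z has integer coordinates
  have hzint : IsIntVec z := by
    intro k
    choose m hm using fun j => hint j k
    refine ⟨∑ j ∈ Finset.univ.erase i, α j * m j, ?_⟩
    rw [hz]
    simp only [Finset.sum_apply, Pi.smul_apply, smul_eq_mul, hm]
    push_cast
    rfl
  -- the matrix of u is a unit
  have hunit : IsUnit (Matrix.of u) := by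
    refine (Matrix.isUnit_iff_isUnit_det _).2 (isUnit_iff_ne_zero.2 ?_)
    intro h0
    rw [h0] at hdet
    simp at hdet
  have hinj : Function.Injective (Matrix.of u).vecMul :=
    Matrix.vecMul_injective_iff_isUnit.2 hunit
  -- key inequality for s = ±1
  have key : ∀ s : ℝ, s = 1 ∨ s = -1 → normM M (u i) ≤ normM M (u i + s • z) := by
    intro s hs
    apply hmin i
    · intro k
      obtain ⟨mu, hmu⟩ := hint i k
      obtain ⟨mz, hmz⟩ := hzint k
      rcases hs with h | h
      · exact ⟨mu + mz, by simp [hmu, hmz, h]⟩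
      · exact ⟨mu - mz, by simp [hmu, hmz, h, sub_eq_add_neg]⟩
    · rintro ⟨c, hc0, hce⟩
      -- u i + s • z = Σ b j • u j with b i = 1
      set b : Fin d → ℝ := fun j => if j = i then 1 else s * α j with hb
      have hrep : u i + s • z = ∑ j, b j • u j := by
        rw [hz, Finset.smul_sum]
        rw [← Finset.add_sum_erase _ (fun j => b j • u j) (Finset.mem_univ i)]
        congr 1
        · simp [hb]
        · apply Finset.sum_congr rfl
          intro j hj
          have : j ≠ i := (Finset.mem_erase.1 hj).1
          simp [hb, this, smul_smul]
      have hvec : (Matrix.of u).vecMul b = (Matrix.of u).vecMul (fun j => (c j : ℝ)) := by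
        funext k
        have h1 : (∑ j, b j • u j) k = (∑ j, (c j : ℝ) • u j) k := by
          rw [← hrep, hce]
        simpa [Matrix.vecMul, dotProduct, Finset.sum_apply, Pi.smul_apply,
          smul_eq_mul] using h1
      have hbc : b = fun j => (c j : ℝ) := hinj hvec
      have hbi : b i = 1 := by simp [hb]
      have hci : c i = 0 := hc0 i (by simp)
      rw [hbc] at hbi
      simp [hci] at hbi
  -- squared inequality
  have hq : ∀ x : Fin d → ℝ, 0 ≤ x ⬝ᵥ M.mulVec x := fun x =>
    hM.posSemidef.re_dotProduct_nonneg x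
  have expand : ∀ s : ℝ, (u i + s • z) ⬝ᵥ M.mulVec (u i + s • z)
      = u i ⬝ᵥ M.mulVec (u i) + 2 * s * (u i ⬝ᵥ M.mulVec z)
        + s ^ 2 * (z ⬝ᵥ M.mulVec z) := by
    intro s
    simp only [Matrix.mulVec_add, Matrix.mulVec_smul, dotProduct_add,
      add_dotProduct, smul_dotProduct, dotProduct_smul,
      smul_eq_mul, dot_symm' hM z (u i)]
    ring
  have sq_key : ∀ s : ℝ, s = 1 ∨ s = -1 →
      u i ⬝ᵥ M.mulVec (u i) ≤ (u i + s • z) ⬝ᵥ M.mulVec (u i + s • z) := by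
    intro s hs
    have h := key s hs
    have h1 : (normM M (u i)) ^ 2 ≤ (normM M (u i + s • z)) ^ 2 := by
      apply pow_le_pow_left₀ (Real.sqrt_nonneg _) h
    rwa [normM_sq hM, normM_sq hM] at h1
  have e1 := sq_key 1 (Or.inl rfl)
  have e2 := sq_key (-1) (Or.inr rfl)
  rw [expand 1] at e1
  rw [expand (-1)] at e2
  rw [normM_sq hM]
  rcases abs_cases (u i ⬝ᵥ M.mulVec z) with ⟨ha, _⟩ | ⟨ha, _⟩ <;> rw [ha] <;> nlinarith

end
end

section
/- Let 1 ≤ d ≤ 4 and let M, N ∈ S_d^+. Let (u_1,…,u_d) be an M-reduced basis of ℤ^d and let 𝒯 be an N-reduced mesh. Let z ∈ ℤ^d be a point which is not a vertex of 𝒯. Then there exists 1 ≤ l ≤ d such that z ∈ u_1ℤ + ⋯ + u_lℤ and ‖z‖_M² · e^{4·d_×(M,N)} ≥ ‖u_l‖_M² + ‖u_1‖_M². -/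
open Matrix
open scoped BigOperators ENNReal Classical

noncomputable section

/-!
A small positive multiple of `z` lies in a simplex of `𝒯` with vertices `0, v₁, …, v_d`. That
simplex has volume `1/d!`, so `(v₁, …, v_d)` is a basis of `ℤ^d` and `z = ∑ cᵢ vᵢ` with
`cᵢ ∈ ℕ`. Since the `vᵢ` are pairwise `N`-acute, `‖z‖_N² ≥ ∑ cᵢ² ‖vᵢ‖_N²`, and since `z` is not a
vertex, this is at least `‖v_j‖_N² + ‖v_j'‖_N²` for any `j` with `c_j ≠ 0` and a suitable `j'`.
Take `l` minimal with `z ∈ u₁ℤ + ⋯ + u_lℤ`; then some `v_j` with `c_j ≠ 0` lies outside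
`u₁ℤ + ⋯ + u_{l-1}ℤ`, so reducedness gives `‖u_l‖_M ≤ ‖v_j‖_M` and `‖u₁‖_M ≤ ‖v_j'‖_M`. Each of
the two changes of norm between `M` and `N` costs a factor `e^{2 d_×(M,N)}` on squared norms.
-/

open MeasureTheory Filter Topology

theorem le_exp_mul_of_abs_log_sub_le {a b D : ℝ} (ha : 0 < a) (hb : 0 < b)
    (h : |Real.log a - Real.log b| ≤ D) : a ≤ Real.exp D * b :=
  calc a = Real.exp (Real.log a) := (Real.exp_log ha).symm
    _ ≤ Real.exp (D + Real.log b) := Real.exp_le_exp.2 (by linarith [(abs_le.1 h).2])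
    _ = Real.exp D * b := by rw [Real.exp_add, Real.exp_log hb]

section NormM

variable {d : ℕ} {M N : Matrix (Fin d) (Fin d) ℝ}

theorem normM_nonneg (M : Matrix (Fin d) (Fin d) ℝ) (x : Fin d → ℝ) : 0 ≤ normM M x :=
  Real.sqrt_nonneg _

theorem sq_normM (hM : M.PosSemidef) (x : Fin d → ℝ) : normM M x ^ 2 = x ⬝ᵥ M *ᵥ x :=
  Real.sq_sqrt (by simpa using hM.dotProduct_mulVec_nonneg x)

theorem normM_pos (hM : M.PosDef) {x : Fin d → ℝ} (hx : x ≠ 0) : 0 < normM M x :=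
  Real.sqrt_pos.2 (by simpa using hM.dotProduct_mulVec_pos hx)

theorem normM_smul (M : Matrix (Fin d) (Fin d) ℝ) (c : ℝ) (x : Fin d → ℝ) :
    normM M (c • x) = |c| * normM M x := by
  rw [normM, normM, Matrix.mulVec_smul, smul_dotProduct, dotProduct_smul, smul_eq_mul, smul_eq_mul,
    ← mul_assoc, ← sq, Real.sqrt_mul (sq_nonneg c), Real.sqrt_sq_eq_abs]

theorem continuous_normM (M : Matrix (Fin d) (Fin d) ℝ) : Continuous (normM M) := by
  unfold normM
  fun_prop

theorem bddAbove_dTimes (hM : M.PosDef) (hN : N.PosDef) :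
    BddAbove {r : ℝ | ∃ u : Fin d → ℝ, u ≠ 0 ∧
      r = |Real.log (normM M u) - Real.log (normM N u)|} := by
  set F : (Fin d → ℝ) → ℝ := fun u => |Real.log (normM M u) - Real.log (normM N u)|
  have hF (u : Fin d → ℝ) (hu : u ≠ 0) : F u = F (‖u‖⁻¹ • u) := by
    have hlog {P : Matrix (Fin d) (Fin d) ℝ} (hP : P.PosDef) :
        Real.log (normM P (‖u‖⁻¹ • u)) = Real.log ‖u‖⁻¹ + Real.log (normM P u) := by
      rw [normM_smul, abs_of_pos (by positivity),
        Real.log_mul (by positivity) (normM_pos hP hu).ne']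
    simp only [F, hlog hM, hlog hN, add_sub_add_left_eq_sub]
  have hcont : ContinuousOn F (Metric.sphere 0 1) := by
    have hlog {P : Matrix (Fin d) (Fin d) ℝ} (hP : P.PosDef) :
        ContinuousOn (fun u => Real.log (normM P u)) (Metric.sphere 0 1) :=
      (continuous_normM P).continuousOn.log fun u hu =>
        (normM_pos hP (ne_zero_of_mem_sphere one_ne_zero ⟨u, hu⟩)).ne'
    exact ((hlog hM).sub (hlog hN)).abs
  obtain ⟨C, hC⟩ := (isCompact_sphere (0 : Fin d → ℝ) 1).bddAbove_image hcont
  refine ⟨C, ?_⟩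
  rintro r ⟨u, hu, rfl⟩
  change F u ≤ C
  rw [hF u hu]
  exact hC ⟨_, by simp [norm_smul, hu], rfl⟩

theorem abs_log_normM_sub_le_dTimes (hM : M.PosDef) (hN : N.PosDef) {u : Fin d → ℝ}
    (hu : u ≠ 0) : |Real.log (normM M u) - Real.log (normM N u)| ≤ dTimes M N :=
  le_csSup (bddAbove_dTimes hM hN) ⟨u, hu, rfl⟩

theorem sq_normM_add_sq_normM_le (hM : M.PosDef) (hN : N.PosDef) {x y z : Fin d → ℝ}
    (hx : x ≠ 0) (hy : y ≠ 0) (hz : z ≠ 0)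
    (h : x ⬝ᵥ N *ᵥ x + y ⬝ᵥ N *ᵥ y ≤ z ⬝ᵥ N *ᵥ z) :
    normM M x ^ 2 + normM M y ^ 2 ≤ normM M z ^ 2 * Real.exp (4 * dTimes M N) := by
  set E := Real.exp (dTimes M N)
  have hMN {w : Fin d → ℝ} (hw : w ≠ 0) : normM M w ≤ E * normM N w :=
    le_exp_mul_of_abs_log_sub_le (normM_pos hM hw) (normM_pos hN hw)
      (abs_log_normM_sub_le_dTimes hM hN hw)
  have hNM : normM N z ≤ E * normM M z :=
    le_exp_mul_of_abs_log_sub_le (normM_pos hN hz) (normM_pos hM hz)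
      (abs_sub_comm (Real.log _) _ ▸ abs_log_normM_sub_le_dTimes hM hN hz)
  simp only [← sq_normM hN.posSemidef] at h
  calc normM M x ^ 2 + normM M y ^ 2 ≤ (E * normM N x) ^ 2 + (E * normM N y) ^ 2 :=
        add_le_add (pow_le_pow_left₀ (normM_nonneg M x) (hMN hx) 2)
          (pow_le_pow_left₀ (normM_nonneg M y) (hMN hy) 2)
    _ = E ^ 2 * (normM N x ^ 2 + normM N y ^ 2) := by ring
    _ ≤ E ^ 2 * (E * normM M z) ^ 2 := by
        gcongr
        exact h.trans (pow_le_pow_left₀ (normM_nonneg N z) hNM 2)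
    _ = normM M z ^ 2 * Real.exp (4 * dTimes M N) := by
        rw [show (4 : ℝ) = (4 : ℕ) by norm_num, Real.exp_nat_mul]
        ring

end NormM

section Lattice

variable {d : ℕ} {u : Fin d → Fin d → ℝ} {k : ℕ} {z : Fin d → ℝ}

theorem InLatticeSpan.mono {k' : ℕ} (h : k ≤ k') (hz : InLatticeSpan u k z) :
    InLatticeSpan u k' z :=
  let ⟨c, hc0, hc⟩ := hz
  ⟨c, fun i hi => hc0 i fun hik => hi (hik.trans_le h), hc⟩

theorem eq_zero_of_inLatticeSpan_zero (hz : InLatticeSpan u 0 z) : z = 0 := by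
  obtain ⟨c, hc0, rfl⟩ := hz
  simp [hc0 _ (Nat.not_lt_zero _)]

def latticeSpan (u : Fin d → Fin d → ℝ) (k : ℕ) : AddSubgroup (Fin d → ℝ) where
  carrier := {z | InLatticeSpan u k z}
  add_mem' := by
    rintro _ _ ⟨a, ha, rfl⟩ ⟨b, hb, rfl⟩
    exact ⟨a + b, fun i hi => by simp [ha i hi, hb i hi],
      by simp [add_smul, Finset.sum_add_distrib]⟩
  zero_mem' := ⟨0, fun _ _ => rfl, by simp⟩
  neg_mem' := by
    rintro _ ⟨a, ha, rfl⟩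
    exact ⟨-a, fun i hi => by simp [ha i hi], by simp [neg_smul]⟩

theorem exists_ne_zero_not_inLatticeSpan {ι : Type*} [Fintype ι] {v : ι → Fin d → ℝ}
    {c : ι → ℕ} (h : ¬ InLatticeSpan u k (∑ i, (c i : ℝ) • v i)) :
    ∃ j, c j ≠ 0 ∧ ¬ InLatticeSpan u k (v j) := by
  contrapose! h
  refine (latticeSpan u k).sum_mem fun j _ => ?_
  rw [Nat.cast_smul_eq_nsmul]
  by_cases hj : c j = 0
  · simp [hj, zero_mem]
  · exact nsmul_mem (h j hj) _

theorem exists_int_coeffs_of_abs_det_eq_one {v : Fin d → Fin d → ℝ} (hv : ∀ i, IsIntVec (v i))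
    (hdet : |(Matrix.of v).det| = 1) (hz : IsIntVec z) :
    ∃ c : Fin d → ℤ, z = ∑ i, (c i : ℝ) • v i := by
  choose A hA using hv
  choose z₀ hz₀ using hz
  have hvA : Matrix.of v = (Int.castRingHom ℝ).mapMatrix (Matrix.of A) := by
    ext i j
    exact hA i j
  have hdetA : ((Matrix.of A).det : ℝ) = (Matrix.of v).det := by
    rw [hvA]
    exact (Int.castRingHom ℝ).map_det _
  have hunit : IsUnit (Matrix.of A).det :=
    Int.isUnit_iff_abs_eq.2 (by exact_mod_cast hdetA ▸ hdet)
  refine ⟨z₀ ᵥ* (Matrix.of A)⁻¹, funext fun j => ?_⟩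
  have key := congrArg (fun w : Fin d → ℤ => (w j : ℝ))
    (show z₀ ᵥ* (Matrix.of A)⁻¹ ᵥ* Matrix.of A = z₀ by
      rw [Matrix.vecMul_vecMul, Matrix.nonsing_inv_mul _ hunit, Matrix.vecMul_one])
  simp only [Matrix.vecMul, dotProduct, Int.cast_sum, Int.cast_mul, Matrix.of_apply] at key
  rw [hz₀, ← key]
  simp [Finset.sum_apply, hA, Matrix.vecMul, dotProduct]

end Lattice

namespace IsReducedBasis

variable {d : ℕ} {M : Matrix (Fin d) (Fin d) ℝ} {u : Fin d → Fin d → ℝ} {z : Fin d → ℝ}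

theorem inLatticeSpan (hu : IsReducedBasis M u) (hz : IsIntVec z) : InLatticeSpan u d z :=
  let ⟨c, hc⟩ := exists_int_coeffs_of_abs_det_eq_one hu.1 hu.2.1 hz
  ⟨c, fun i hi => absurd i.isLt hi, hc⟩

theorem exists_inLatticeSpan_succ (hu : IsReducedBasis M u) (hz : IsIntVec z) (hz0 : z ≠ 0) :
    ∃ l : Fin d, InLatticeSpan u (l + 1) z ∧ ¬ InLatticeSpan u l z := by
  obtain ⟨l, hl, hl1⟩ := Nat.exists_not_and_succ_of_not_zero_of_exists
    (p := fun k => InLatticeSpan u k z) (fun h => hz0 (eq_zero_of_inLatticeSpan_zero h))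
    ⟨d, hu.inLatticeSpan hz⟩
  have hld : l < d := by
    by_contra! h
    exact hl ((hu.inLatticeSpan hz).mono h)
  exact ⟨⟨l, hld⟩, hl1, hl⟩

end IsReducedBasis

section AcuteFamily

variable {ι n : Type*} [Fintype ι] [Fintype n] (N : Matrix n n ℝ) (v : ι → n → ℝ)

theorem sum_smul_dotProduct_mulVec_sum_smul (c : ι → ℝ) :
    (∑ i, c i • v i) ⬝ᵥ N *ᵥ (∑ i, c i • v i)
      = ∑ i, ∑ k, c i * c k * (v i ⬝ᵥ N *ᵥ v k) := by
  simp only [Matrix.mulVec_sum, Matrix.mulVec_smul, dotProduct_sum, sum_dotProduct,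
    dotProduct_smul, smul_dotProduct, smul_eq_mul, Finset.mul_sum]
  rw [Finset.sum_comm]
  simp only [mul_left_comm, mul_assoc]

variable {N v}

theorem sum_sq_mul_dotProduct_mulVec_le (hv : ∀ i k, 0 ≤ v i ⬝ᵥ N *ᵥ v k) {c : ι → ℝ}
    (hc : ∀ i, 0 ≤ c i) (s : Finset ι) :
    ∑ i ∈ s, c i ^ 2 * (v i ⬝ᵥ N *ᵥ v i) ≤ (∑ i, c i • v i) ⬝ᵥ N *ᵥ (∑ i, c i • v i) := by
  have hterm (i k : ι) : 0 ≤ c i * c k * (v i ⬝ᵥ N *ᵥ v k) :=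
    mul_nonneg (mul_nonneg (hc i) (hc k)) (hv i k)
  rw [sum_smul_dotProduct_mulVec_sum_smul]
  calc ∑ i ∈ s, c i ^ 2 * (v i ⬝ᵥ N *ᵥ v i)
      ≤ ∑ i, c i * c i * (v i ⬝ᵥ N *ᵥ v i) :=
        Finset.sum_le_sum_of_subset_of_nonneg (Finset.subset_univ s)
          (fun i _ _ => hterm i i) |>.trans_eq' (by simp only [sq])
    _ ≤ ∑ i, ∑ k, c i * c k * (v i ⬝ᵥ N *ᵥ v k) :=
        Finset.sum_le_sum fun i _ => Finset.single_le_sum (fun k _ => hterm i k) (Finset.mem_univ i)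

theorem exists_dotProduct_mulVec_add_le (hv : ∀ i k, 0 ≤ v i ⬝ᵥ N *ᵥ v k) (c : ι → ℕ) {j : ι}
    (hj : c j ≠ 0) (hne : ∑ i, (c i : ℝ) • v i ≠ v j) :
    ∃ j', v j ⬝ᵥ N *ᵥ v j + v j' ⬝ᵥ N *ᵥ v j'
      ≤ (∑ i, (c i : ℝ) • v i) ⬝ᵥ N *ᵥ (∑ i, (c i : ℝ) • v i) := by
  have hdiag :=
    sum_sq_mul_dotProduct_mulVec_le hv (c := fun i => (c i : ℝ)) fun i => Nat.cast_nonneg _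
  rcases Nat.lt_or_ge 1 (c j) with hj2 | hj1
  · refine ⟨j, le_trans ?_ (hdiag {j})⟩
    have : (2 : ℝ) ≤ c j := by exact_mod_cast hj2
    have h4 : (2 : ℝ) ≤ (c j : ℝ) ^ 2 := by nlinarith
    rw [Finset.sum_singleton]
    linarith [mul_le_mul_of_nonneg_right h4 (hv j j)]
  · have hcj : c j = 1 := by omega
    obtain ⟨j', hj'j, hj'⟩ : ∃ j', j' ≠ j ∧ c j' ≠ 0 := by
      by_contra! h
      refine hne ?_
      rw [Fintype.sum_eq_single j fun i hi => by rw [h i hi, Nat.cast_zero, zero_smul], hcj,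
        Nat.cast_one, one_smul]
    refine ⟨j', le_trans ?_ (hdiag {j, j'})⟩
    have h1 : (1 : ℝ) ≤ (c j' : ℝ) ^ 2 :=
      one_le_pow₀ (by exact_mod_cast Nat.one_le_iff_ne_zero.2 hj')
    rw [Finset.sum_pair hj'j.symm, hcj, Nat.cast_one, one_pow, one_mul]
    linarith [mul_le_mul_of_nonneg_right h1 (hv j' j')]

end AcuteFamily

section CornerSimplex

variable {ι : Type*} [Fintype ι]

def cornerSimplex (ι : Type*) [Fintype ι] : Set (ι → ℝ) := {x | (∀ i, 0 ≤ x i) ∧ ∑ i, x i ≤ 1}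

theorem convex_cornerSimplex : Convex ℝ (cornerSimplex ι) := by
  refine fun x hx y hy a b ha hb hab => ⟨fun i => ?_, ?_⟩
  · simpa using add_nonneg (mul_nonneg ha (hx.1 i)) (mul_nonneg hb (hy.1 i))
  · simp only [Pi.add_apply, Pi.smul_apply, smul_eq_mul, Finset.sum_add_distrib, ← Finset.mul_sum]
    nlinarith [hx.2, hy.2]

theorem convexHull_insert_zero_range {E : Type*} [AddCommGroup E] [Module ℝ E] (v : ι → E) :
    convexHull ℝ (insert 0 (Set.range v)) = Fintype.linearCombination ℝ v '' cornerSimplex ι := by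
  apply le_antisymm
  · refine convexHull_min (Set.insert_subset_iff.2 ⟨⟨0, ⟨fun _ => le_rfl, by simp⟩, by simp⟩, ?_⟩)
      (convex_cornerSimplex.linear_image _)
    rintro _ ⟨k, rfl⟩
    refine ⟨Pi.single k 1, ⟨fun i => ?_, by simp⟩, by simp⟩
    by_cases h : i = k <;> simp [h]
  · rintro _ ⟨c, ⟨hc0, hc1⟩, rfl⟩
    have := (convex_convexHull ℝ (insert (0 : E) (Set.range v))).sum_mem
      (t := Finset.univ) (w := fun o : Option ι => o.elim (1 - ∑ i, c i) c)
      (z := fun o => o.elim 0 v) (by rintro (_ | i) _ <;> simp [hc0, hc1])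
      (by simp [Fintype.sum_option])
      (by rintro (_ | i) _ <;> exact subset_convexHull _ _ (by simp))
    simpa [Fintype.sum_option, Fintype.linearCombination_apply] using this

def signFlip (S : Finset ι) : (ι → ℝ) →ₗ[ℝ] ι → ℝ :=
  Matrix.toLin' (Matrix.diagonal fun i => if i ∈ S then -1 else 1)

theorem signFlip_apply (S : Finset ι) (x : ι → ℝ) (i : ι) :
    signFlip S x i = if i ∈ S then -x i else x i := by
  simp only [signFlip, Matrix.toLin'_apply, Matrix.mulVec_diagonal]
  split_ifs <;> simp

theorem abs_det_signFlip (S : Finset ι) : |LinearMap.det (signFlip S)| = 1 := by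
  rw [signFlip, LinearMap.det_toLin', Matrix.det_diagonal, Finset.abs_prod]
  exact Finset.prod_eq_one fun i _ => by split_ifs <;> simp

theorem abs_signFlip_apply (S : Finset ι) (x : ι → ℝ) (i : ι) : |signFlip S x i| = |x i| := by
  rw [signFlip_apply]; split_ifs <;> simp

theorem iUnion_preimage_signFlip_cornerSimplex :
    ⋃ S : Finset ι, signFlip S ⁻¹' cornerSimplex ι = {x : ι → ℝ | ∑ i, |x i| ≤ 1} := by
  ext x
  simp only [Set.mem_iUnion, Set.mem_preimage, Set.mem_ofPred_eq]
  constructor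
  · rintro ⟨S, hS0, hS1⟩
    simpa only [← abs_signFlip_apply S x, abs_of_nonneg (hS0 _)] using hS1
  · intro hx
    have hflip (i : ι) : signFlip (Finset.univ.filter fun i => x i < 0) x i = |x i| := by
      rw [signFlip_apply]
      split_ifs with h <;> simp only [Finset.mem_filter, Finset.mem_univ, true_and] at h
      · exact (abs_of_neg h).symm
      · exact (abs_of_nonneg (not_lt.1 h)).symm
    exact ⟨_, fun i => hflip i ▸ abs_nonneg _, by simpa only [hflip] using hx⟩

theorem aedisjoint_preimage_signFlip_cornerSimplex :
    Pairwise (Function.onFun (AEDisjoint volume)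
      fun S : Finset ι => signFlip S ⁻¹' cornerSimplex ι) := by
  intro S T hST
  obtain ⟨i, hi⟩ : ∃ i, ¬(i ∈ S ↔ i ∈ T) := by simpa [Finset.ext_iff] using hST
  refine measure_mono_null (fun x ⟨⟨hS, _⟩, ⟨hT, _⟩⟩ => ?_) (Measure.pi_hyperplane _ i 0)
  have hS := hS i
  have hT := hT i
  simp only [signFlip_apply] at hS hT
  show x i = 0
  split_ifs at hS hT <;> simp_all <;> linarith

theorem measurableSet_cornerSimplex : MeasurableSet (cornerSimplex ι) := by
  unfold cornerSimplex
  measurability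

theorem volume_preimage_signFlip (S : Finset ι) (s : Set (ι → ℝ)) :
    volume (signFlip S ⁻¹' s) = volume s := by
  rw [Measure.addHaar_preimage_linearMap _ (abs_pos.1 (by rw [abs_det_signFlip]; exact one_pos)),
    abs_inv, abs_det_signFlip, inv_one, ENNReal.ofReal_one, one_mul]

theorem volume_sum_abs_le_one [Nonempty ι] :
    volume {x : ι → ℝ | ∑ i, |x i| ≤ 1}
      = 2 ^ Fintype.card ι * ((Fintype.card ι).factorial : ℝ≥0∞)⁻¹ := by
  have h := volume_sum_rpow_le ι (p := 1) le_rfl 1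
  simp only [Real.rpow_one, div_one, one_add_one_eq_two, Real.Gamma_two, mul_one,
    ENNReal.ofReal_one, one_pow, one_mul, Real.Gamma_nat_eq_factorial] at h
  rw [h, ENNReal.ofReal_div_of_pos (by positivity), ENNReal.ofReal_pow zero_le_two,
    ENNReal.ofReal_natCast, ENNReal.ofReal_ofNat, div_eq_mul_inv]

-- Up to null sets, the `2 ^ card ι` reflections of the corner simplex tile the unit `ℓ¹` ball.
theorem volume_cornerSimplex [Nonempty ι] :
    volume (cornerSimplex ι) = ((Fintype.card ι).factorial : ℝ≥0∞)⁻¹ := by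
  have htiling :
      volume {x : ι → ℝ | ∑ i, |x i| ≤ 1} = 2 ^ Fintype.card ι * volume (cornerSimplex ι) := by
    rw [← iUnion_preimage_signFlip_cornerSimplex,
      measure_iUnion₀ aedisjoint_preimage_signFlip_cornerSimplex fun S =>
        (measurableSet_cornerSimplex.preimage
          (signFlip S).continuous_of_finiteDimensional.measurable).nullMeasurableSet,
      tsum_fintype, Finset.sum_congr rfl fun S _ => volume_preimage_signFlip S _, Finset.sum_const,
      Finset.card_univ, Fintype.card_finset, nsmul_eq_mul, Nat.cast_pow, Nat.cast_ofNat]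
  exact (ENNReal.mul_right_inj (by simp) (by simp)).1 (htiling.symm.trans volume_sum_abs_le_one)

end CornerSimplex

theorem volume_convexHull_insert_zero_range {ι : Type*} [Fintype ι] [DecidableEq ι] [Nonempty ι]
    (v : ι → ι → ℝ) :
    volume (convexHull ℝ (insert 0 (Set.range v)))
      = ENNReal.ofReal |(Matrix.of v).det| * ((Fintype.card ι).factorial : ℝ≥0∞)⁻¹ := by
  have hlin : Fintype.linearCombination ℝ v = Matrix.toLin' (Matrix.of v)ᵀ := by
    ext c i
    simp [Fintype.linearCombination_apply, Matrix.mulVec, dotProduct, mul_comm]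
  rw [convexHull_insert_zero_range, Measure.addHaar_image_linearMap, volume_cornerSimplex, hlin,
    LinearMap.det_toLin', Matrix.det_transpose]

theorem nonneg_of_sum_smul_eq_smul_sum {ι : Type*} [Fintype ι] [DecidableEq ι] {v : ι → ι → ℝ}
    (hdet : (Matrix.of v).det ≠ 0) {a c : ι → ℝ} {t : ℝ} (ht : 0 < t) (ha : ∀ i, 0 ≤ a i)
    (h : ∑ i, a i • v i = t • ∑ i, c i • v i) (i : ι) : 0 ≤ c i := by
  have hac : a = t • c := by
    refine Matrix.vecMul_injective_iff_isUnit.2 ((Matrix.isUnit_iff_isUnit_det _).2 hdet.isUnit) ?_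
    simp only [Matrix.vecMul_eq_sum]
    exact h.trans (by simp [Finset.smul_sum, smul_smul]; rfl)
  have := ha i
  rw [hac, Pi.smul_apply, smul_eq_mul] at this
  exact (mul_nonneg_iff_of_pos_left ht).1 this

theorem Finset.exists_coe_eq_insert_range {α : Type*} {V : Finset α} {a : α} (ha : a ∈ V)
    {n : ℕ} (hV : V.card = n + 1) :
    ∃ v : Fin n → α, (∀ i, v i ∈ V ∧ v i ≠ a) ∧ (V : Set α) = insert a (Set.range v) := by
  have hW : (V.erase a).card = n := by rw [Finset.card_erase_of_mem ha, hV, Nat.add_sub_cancel]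
  set e := (V.erase a).equivFinOfCardEq hW
  refine ⟨fun i => e.symm i, fun i => (Finset.mem_erase.1 (e.symm i).2).symm, ?_⟩
  rw [show (fun i => (e.symm i : α)) = Subtype.val ∘ e.symm from rfl, e.symm.surjective.range_comp,
    Subtype.range_coe, ← Finset.coe_insert, Finset.insert_erase ha]

namespace IsReducedMesh

variable {d : ℕ} {N : Matrix (Fin d) (Fin d) ℝ} {𝒯 : Finset (Finset (Fin d → ℝ))}

theorem isMeshVertex_zero (h𝒯 : IsReducedMesh N 𝒯) : IsMeshVertex 𝒯 0 := by
  obtain ⟨V, hV, -⟩ := Set.mem_iUnion₂.1 (mem_of_mem_nhds h𝒯.2.1)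
  exact ⟨V, hV, h𝒯.2.2.2.2.1 V hV⟩

theorem exists_eq_sum_natCast_smul (h𝒯 : IsReducedMesh N 𝒯) {z : Fin d → ℝ} (hz : IsIntVec z)
    (hz0 : z ≠ 0) :
    ∃ v : Fin d → Fin d → ℝ, (∀ i, v i ≠ 0 ∧ IsIntVec (v i) ∧ IsMeshVertex 𝒯 (v i)) ∧
      (∀ i k, 0 ≤ v i ⬝ᵥ N *ᵥ v k) ∧ ∃ c : Fin d → ℕ, z = ∑ i, (c i : ℝ) • v i := by
  obtain ⟨hmesh, hnhds, hint, hvol, h0, hacute⟩ := h𝒯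
  have : Nonempty (Fin d) := let ⟨i, _⟩ := Function.ne_iff.1 hz0; ⟨i⟩
  obtain ⟨t, htz, ht⟩ : ∃ t : ℝ, t • z ∈ ⋃ V ∈ 𝒯, convexHull ℝ (V : Set (Fin d → ℝ)) ∧ 0 < t := by
    have : Tendsto (fun t : ℝ => t • z) (𝓝[>] 0) (𝓝 0) :=
      ((continuous_id.smul continuous_const).tendsto' 0 0 (zero_smul ℝ z)).mono_left
        nhdsWithin_le_nhds
    exact ((this.eventually hnhds).and self_mem_nhdsWithin).exists
  obtain ⟨V, hV, htz⟩ := Set.mem_iUnion₂.1 htz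
  obtain ⟨v, hv, hVv⟩ := Finset.exists_coe_eq_insert_range (h0 V hV) (hmesh.1 V hV).1
  have hdet : |(Matrix.of v).det| = 1 := by
    have := hvol V hV
    rw [hVv, volume_convexHull_insert_zero_range, Fintype.card_fin, one_div,
      ENNReal.ofReal_inv_of_pos (by positivity), ENNReal.ofReal_natCast] at this
    have h1 : ENNReal.ofReal |(Matrix.of v).det| = 1 :=
      (ENNReal.mul_eq_right (ENNReal.inv_ne_zero.2 (ENNReal.natCast_ne_top _))
        (ENNReal.inv_ne_top.2 (Nat.cast_ne_zero.2 (Nat.factorial_ne_zero d)))).1 this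
    exact (ENNReal.ofReal_eq_one).1 h1
  obtain ⟨c, rfl⟩ := exists_int_coeffs_of_abs_det_eq_one (fun i => hint V hV _ (hv i).1) hdet hz
  rw [hVv, convexHull_insert_zero_range] at htz
  obtain ⟨a, ⟨ha, -⟩, hac⟩ := htz
  have hdet0 : (Matrix.of v).det ≠ 0 := fun h => by simp [h] at hdet
  have hc := nonneg_of_sum_smul_eq_smul_sum hdet0 ht ha
    (by rwa [Fintype.linearCombination_apply] at hac)
  refine ⟨v, fun i => ⟨(hv i).2, hint V hV _ (hv i).1, V, hV, (hv i).1⟩,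
    fun i k => hacute V hV _ (hv i).1 _ (hv k).1 (hv i).2 (hv k).2, fun i => (c i).toNat,
    Finset.sum_congr rfl fun i _ => ?_⟩
  rw [← Int.toNat_of_nonneg (by exact_mod_cast hc i : 0 ≤ c i), Int.cast_natCast]

end IsReducedMesh

theorem stmt4_general {d : ℕ} (hd1 : 1 ≤ d)
    (M N : Matrix (Fin d) (Fin d) ℝ) (hM : M.PosDef) (hN : N.PosDef)
    (u : Fin d → Fin d → ℝ) (hu : IsReducedBasis M u)
    (𝒯 : Finset (Finset (Fin d → ℝ))) (h𝒯 : IsReducedMesh N 𝒯)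
    (z : Fin d → ℝ) (hzint : IsIntVec z) (hz : ¬ IsMeshVertex 𝒯 z) :
    ∃ l : Fin d, InLatticeSpan u ((l : ℕ) + 1) z ∧
      (normM M z) ^ 2 * Real.exp (4 * dTimes M N)
        ≥ (normM M (u l)) ^ 2 + (normM M (u ⟨0, hd1⟩)) ^ 2 := by
  have hz0 : z ≠ 0 := by
    rintro rfl
    exact hz h𝒯.isMeshVertex_zero
  obtain ⟨v, hv, hacute, c, rfl⟩ := h𝒯.exists_eq_sum_natCast_smul hzint hz0
  obtain ⟨l, hl, hnl⟩ := hu.exists_inLatticeSpan_succ hzint hz0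
  obtain ⟨j, hcj, hvj⟩ := exists_ne_zero_not_inLatticeSpan hnl
  obtain ⟨j', hj'⟩ := exists_dotProduct_mulVec_add_le hacute c hcj fun h => hz (h ▸ (hv j).2.2)
  refine ⟨l, hl, ?_⟩
  calc normM M (u l) ^ 2 + normM M (u ⟨0, hd1⟩) ^ 2 ≤ normM M (v j) ^ 2 + normM M (v j') ^ 2 := by
        gcongr
        · exact normM_nonneg M _
        · exact hu.2.2 l _ (hv j).2.1 hvj
        · exact normM_nonneg M _
        · exact hu.2.2 _ _ (hv j').2.1 fun h => (hv j').1 (eq_zero_of_inLatticeSpan_zero h)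
    _ ≤ _ := sq_normM_add_sq_normM_le hM hN (hv j).1 (hv j').1 hz0 hj'

/-- Lemma of §1.1: a lower bound on the `M`-norm of integer points which are not
vertices of an `N`-reduced mesh. -/
theorem stmt4 {d : ℕ} (hd1 : 1 ≤ d) (hd4 : d ≤ 4)
    (M N : Matrix (Fin d) (Fin d) ℝ) (hM : M.PosDef) (hN : N.PosDef)
    (u : Fin d → Fin d → ℝ) (hu : IsReducedBasis M u)
    (𝒯 : Finset (Finset (Fin d → ℝ))) (h𝒯 : IsReducedMesh N 𝒯)
    (z : Fin d → ℝ) (hzint : IsIntVec z) (hz : ¬ IsMeshVertex 𝒯 z) :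
    ∃ l : Fin d, InLatticeSpan u ((l : ℕ) + 1) z ∧
      (normM M z) ^ 2 * Real.exp (4 * dTimes M N)
        ≥ (normM M (u l)) ^ 2 + (normM M (u ⟨0, hd1⟩)) ^ 2 :=
  stmt4_general hd1 M N hM hN u hu 𝒯 h𝒯 z hzint hz

end
end
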